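/- Fix a, b ∈ ℝ \ {0} with a ≠ b, and let G₇ be the group whose underlying set is ℝ⁵ with multiplication (x₁,x₂,x₃,x₄,x₅)·(y₁,y₂,y₃,y₄,y₅) = (y₁+x₁e^{a y₃}, y₂+x₂e^{b y₃}, x₃+y₃, x₄+y₄, x₅+y₅). Let H = { (x, y, 0, x+y, 0) : x, y ∈ ℝ } and A = { (2−e^{b k₁}−e^{a k₁}, 2−e^{b k₁}−e^{a k₁}, k₁, k₂, k₃) : k₁, k₂, k₃ ∈ ℝ }. Then H is a subgroup of G₇, A is a left transversal to H in G₇, a⁻¹b⁻¹ab ∈ H for all a, b ∈ A, and the subgroup of G₇ generated by A is all of G₇. -/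

import Mathlib

/-- The underlying set `ℝ⁵` of the group `G₇` (with fixed parameters `p, q`). -/
@[ext] structure G7 (p q : ℝ) where
  x1 : ℝ
  x2 : ℝ
  x3 : ℝ
  x4 : ℝ
  x5 : ℝ

namespace G7

variable (p q : ℝ)

/-- `(x₁,…,x₅)·(y₁,…,y₅) = (y₁+x₁e^{p y₃}, y₂+x₂e^{q y₃}, x₃+y₃, x₄+y₄, x₅+y₅)`. -/
noncomputable def gmul (u v : G7 p q) : G7 p q :=
  ⟨v.x1 + u.x1 * Real.exp (p * v.x3), v.x2 + u.x2 * Real.exp (q * v.x3),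
    u.x3 + v.x3, u.x4 + v.x4, u.x5 + v.x5⟩

/-- The identity element. -/
def gone : G7 p q := ⟨0, 0, 0, 0, 0⟩

/-- Inversion. -/
noncomputable def ginv (u : G7 p q) : G7 p q :=
  ⟨-u.x1 * Real.exp (p * -u.x3), -u.x2 * Real.exp (q * -u.x3), -u.x3, -u.x4, -u.x5⟩

noncomputable instance : Group (G7 p q) where
  mul := gmul p q
  one := gone p q
  inv := ginv p q
  mul_assoc u v w := by
    show gmul p q (gmul p q u v) w = gmul p q u (gmul p q v w)
    simp only [gmul, mk.injEq, mul_add, Real.exp_add]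
    refine ⟨by ring, by ring, by ring, by ring, by ring⟩
  one_mul u := by
    show gmul p q (gone p q) u = u
    simp [gmul, gone]
  mul_one u := by
    show gmul p q u (gone p q) = u
    simp [gmul, gone]
  inv_mul_cancel u := by
    show gmul p q (ginv p q u) u = gone p q
    have key1 : Real.exp (p * -u.x3) * Real.exp (p * u.x3) = 1 := by
      rw [← Real.exp_add, show p * -u.x3 + p * u.x3 = 0 by ring, Real.exp_zero]
    have key2 : Real.exp (q * -u.x3) * Real.exp (q * u.x3) = 1 := by
      rw [← Real.exp_add, show q * -u.x3 + q * u.x3 = 0 by ring, Real.exp_zero]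
    simp only [gmul, ginv, gone, mk.injEq]
    refine ⟨by linear_combination (-u.x1) * key1, by linear_combination (-u.x2) * key2,
      by ring, by ring, by ring⟩

end G7

/-- `A` is a left transversal to `S` in the ambient group: every element has a
unique factorization `k = a * s` with `a ∈ A`, `s ∈ S`. -/
def IsLeftTransversal {G : Type*} [Group G] (A S : Set G) : Prop :=
  ∀ k : G, ∃! x : G × G, x.1 ∈ A ∧ x.2 ∈ S ∧ k = x.1 * x.2

/-!
Conjugation by an element with third coordinate `r` acts on the normal subgroup
`N = {(u, v, 0, 0, 0)} ≅ ℝ²` by `(u, v) ↦ (u e^{pr}, v e^{qr})`. Since `A` has elements with every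
third coordinate, `⟨A⟩ ∩ N` is an additive subgroup of `ℝ²` invariant under these scalings. It
contains the product of the elements of `A` with `(k₁, k₂, k₃) = (1, 0, 0)` and `(-1, 0, 0)`, both
of whose coordinates are nonzero. If `e^{qr} = 2`, twice such a vector
minus its scaling by `r` lies on the first axis, and it is nonzero because `p ≠ q` forces
`e^{pr} ≠ 2`; differences of its positive multiples fill that axis, and the second axis follows.
Hence `N ⊆ ⟨A⟩` and `A N = G₇`. Commutators lie in `N`, and for elements of `A` their two
coordinates cancel because `e^{pk} + e^{qk} = 2 - c`, where `c` is the common first and second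
coordinate of the elements of `A` with third coordinate `k`; this puts them in `H`.
-/

open Real

theorem AddSubgroup.smul_mem_of_forall_pos_smul_mem {E : Type*} [AddCommGroup E] [Module ℝ E]
    {M : AddSubgroup E} {z : E} (h : ∀ c : ℝ, 0 < c → c • z ∈ M) (t : ℝ) : t • z ∈ M := by
  have ht : t = (|t| + 1) - (|t| + 1 - t) := by ring
  rw [ht, sub_smul]
  exact sub_mem (h _ (by positivity)) (h _ (by linarith [le_abs_self t]))

theorem one_sub_exp_ne_zero {x : ℝ} (hx : x ≠ 0) : 1 - exp x ≠ 0 :=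
  sub_ne_zero.2 fun h => hx ((exp_eq_one_iff x).1 h.symm)

def ScalingInvariant (p q : ℝ) (M : AddSubgroup (ℝ × ℝ)) : Prop :=
  ∀ r : ℝ, ∀ m ∈ M, (m.1 * exp (p * r), m.2 * exp (q * r)) ∈ M

namespace ScalingInvariant

variable {p q : ℝ} {M : AddSubgroup (ℝ × ℝ)}

theorem mk_zero_mem (hM : ScalingInvariant p q M) (hp : p ≠ 0) {z : ℝ} (hz : z ≠ 0)
    (hzM : (z, 0) ∈ M) (x : ℝ) : (x, 0) ∈ M := by
  have hpos : ∀ c : ℝ, 0 < c → c • (z, (0 : ℝ)) ∈ M := fun c hc => by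
    simpa [mul_div_cancel₀ _ hp, exp_log hc, mul_comm] using hM (log c / p) _ hzM
  simpa [div_mul_cancel₀ _ hz] using AddSubgroup.smul_mem_of_forall_pos_smul_mem hpos (x / z)

theorem zero_mk_mem (hM : ScalingInvariant p q M) (hq : q ≠ 0) {z : ℝ} (hz : z ≠ 0)
    (hzM : (0, z) ∈ M) (y : ℝ) : (0, y) ∈ M := by
  have hpos : ∀ c : ℝ, 0 < c → c • ((0 : ℝ), z) ∈ M := fun c hc => by
    simpa [mul_div_cancel₀ _ hq, exp_log hc, mul_comm] using hM (log c / q) _ hzM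
  simpa [div_mul_cancel₀ _ hz] using AddSubgroup.smul_mem_of_forall_pos_smul_mem hpos (y / z)

theorem eq_top (hM : ScalingInvariant p q M) (hp : p ≠ 0) (hq : q ≠ 0) (hpq : p ≠ q)
    {u v : ℝ} (hu : u ≠ 0) (hv : v ≠ 0) (huv : (u, v) ∈ M) : M = ⊤ := by
  obtain ⟨r, hqr⟩ : ∃ r, exp (q * r) = 2 :=
    ⟨log 2 / q, by rw [mul_div_cancel₀ _ hq, exp_log two_pos]⟩
  have hr : r ≠ 0 := by rintro rfl; norm_num at hqr
  have hpr : exp (p * r) ≠ 2 := by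
    rw [← hqr, Ne, exp_eq_exp]
    exact fun h => hpq (mul_right_cancel₀ hr h)
  have hfst : (u * (2 - exp (p * r)), 0) ∈ M := by
    convert sub_mem (nsmul_mem huv 2) (hM r _ huv) using 1
    ext <;> simp [hqr] <;> ring
  have hx : ∀ x : ℝ, (x, 0) ∈ M :=
    hM.mk_zero_mem hp (mul_ne_zero hu (sub_ne_zero.2 hpr.symm)) hfst
  have hy : ∀ y : ℝ, (0, y) ∈ M := hM.zero_mk_mem hq hv (by simpa using sub_mem huv (hx u))
  exact (AddSubgroup.eq_top_iff' M).2 fun m => by simpa using add_mem (hx m.1) (hy m.2)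

end ScalingInvariant

namespace G7

variable {p q : ℝ}

@[simp]
theorem mk_mul_mk (a b c d e a' b' c' d' e' : ℝ) :
    (⟨a, b, c, d, e⟩ * ⟨a', b', c', d', e'⟩ : G7 p q) =
      ⟨a' + a * exp (p * c'), b' + b * exp (q * c'), c + c', d + d', e + e'⟩ :=
  rfl

@[simp]
theorem inv_mk (a b c d e : ℝ) :
    (⟨a, b, c, d, e⟩ : G7 p q)⁻¹ = ⟨-a * exp (p * -c), -b * exp (q * -c), -c, -d, -e⟩ :=
  rfl

@[simp]
theorem one_def : (1 : G7 p q) = ⟨0, 0, 0, 0, 0⟩ :=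
  rfl

theorem inv_mul_mk_mul (g : G7 p q) (u v : ℝ) :
    g⁻¹ * ⟨u, v, 0, 0, 0⟩ * g = ⟨u * exp (p * g.x3), v * exp (q * g.x3), 0, 0, 0⟩ := by
  obtain ⟨a, b, c, d, e⟩ := g
  ext <;> simp [mul_neg, exp_neg] <;> field_simp <;> ring

theorem inv_mul_inv_mul_mul (g h : G7 p q) :
    g⁻¹ * h⁻¹ * g * h =
      ⟨h.x1 * (1 - exp (p * g.x3)) - g.x1 * (1 - exp (p * h.x3)),
        h.x2 * (1 - exp (q * g.x3)) - g.x2 * (1 - exp (q * h.x3)), 0, 0, 0⟩ := by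
  obtain ⟨a, b, c, d, e⟩ := g
  obtain ⟨a', b', c', d', e'⟩ := h
  ext <;> simp [mul_neg, exp_neg] <;> field_simp <;> ring

def planeSubgroup (K : Subgroup (G7 p q)) : AddSubgroup (ℝ × ℝ) where
  carrier := {m | (⟨m.1, m.2, 0, 0, 0⟩ : G7 p q) ∈ K}
  add_mem' {m n} hm hn := by simpa [add_comm] using K.mul_mem hm hn
  zero_mem' := K.one_mem
  neg_mem' {m} hm := by simpa using K.inv_mem hm

theorem scalingInvariant_planeSubgroup (K : Subgroup (G7 p q))
    (hK : ∀ r : ℝ, ∃ g ∈ K, g.x3 = r) : ScalingInvariant p q (planeSubgroup K) := by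
  intro r m hm
  obtain ⟨g, hgK, rfl⟩ := hK r
  change (⟨_, _, 0, 0, 0⟩ : G7 p q) ∈ K
  rw [← inv_mul_mk_mul]
  exact K.mul_mem (K.mul_mem (K.inv_mem hgK) hm) hgK

variable (p q) in
def subgroupH : Subgroup (G7 p q) where
  carrier := {g | ∃ x y : ℝ, g = ⟨x, y, 0, x + y, 0⟩}
  mul_mem' := by
    rintro _ _ ⟨x, y, rfl⟩ ⟨x', y', rfl⟩
    exact ⟨x' + x, y' + y, by ext <;> simp; ring⟩
  one_mem' := ⟨0, 0, by simp⟩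
  inv_mem' := by
    rintro _ ⟨x, y, rfl⟩
    exact ⟨-x, -y, by ext <;> simp; ring⟩

theorem mk_mem_subgroupH {u v : ℝ} (h : u + v = 0) :
    (⟨u, v, 0, 0, 0⟩ : G7 p q) ∈ subgroupH p q :=
  ⟨u, v, by rw [h]⟩

variable (p q) in
def transversalA : Set (G7 p q) :=
  {g | ∃ k1 k2 k3 : ℝ,
    g = ⟨2 - exp (q * k1) - exp (p * k1), 2 - exp (q * k1) - exp (p * k1), k1, k2, k3⟩}

theorem isLeftTransversal_transversalA :
    IsLeftTransversal (transversalA p q) (subgroupH p q : Set (G7 p q)) := by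
  intro k
  set c := 2 - exp (q * k.x3) - exp (p * k.x3)
  refine ⟨(⟨c, c, k.x3, k.x4 - (k.x1 - c) - (k.x2 - c), k.x5⟩,
      ⟨k.x1 - c, k.x2 - c, 0, k.x1 - c + (k.x2 - c), 0⟩),
    ⟨⟨_, _, _, rfl⟩, ⟨_, _, rfl⟩, by ext <;> simp⟩, ?_⟩
  rintro ⟨_, _⟩ ⟨⟨s, k2, k3, rfl⟩, ⟨x, y, rfl⟩, rfl⟩
  ext <;> simp [c]; ring

theorem inv_mul_inv_mul_mul_mem_subgroupH {a b : G7 p q} (ha : a ∈ transversalA p q)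
    (hb : b ∈ transversalA p q) : a⁻¹ * b⁻¹ * a * b ∈ subgroupH p q := by
  obtain ⟨s, -, -, rfl⟩ := ha
  obtain ⟨t, -, -, rfl⟩ := hb
  rw [inv_mul_inv_mul_mul]
  exact mk_mem_subgroupH (by ring)

theorem closure_transversalA (hp : p ≠ 0) (hq : q ≠ 0) (hpq : p ≠ q) :
    Subgroup.closure (transversalA p q) = ⊤ := by
  set C := Subgroup.closure (transversalA p q)
  have hA : ∀ k1 k2 k3 : ℝ, (⟨2 - exp (q * k1) - exp (p * k1),
      2 - exp (q * k1) - exp (p * k1), k1, k2, k3⟩ : G7 p q) ∈ C :=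
    fun k1 k2 k3 => Subgroup.subset_closure ⟨k1, k2, k3, rfl⟩
  have hseed : ((1 - exp (-q)) * (1 - exp (q - p)), (1 - exp (-p)) * (1 - exp (p - q))) ∈
      planeSubgroup C := by
    change (⟨_, _, 0, 0, 0⟩ : G7 p q) ∈ C
    convert C.mul_mem (hA 1 0 0) (hA (-1) 0 0) using 1
    ext <;> simp [exp_neg, exp_sub] <;> field_simp <;> ring
  have hplane : planeSubgroup C = ⊤ :=
    (scalingInvariant_planeSubgroup C fun r => ⟨_, hA r 0 0, rfl⟩).eq_top hp hq hpq
      (mul_ne_zero (one_sub_exp_ne_zero (neg_ne_zero.2 hq))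
        (one_sub_exp_ne_zero (sub_ne_zero.2 hpq.symm)))
      (mul_ne_zero (one_sub_exp_ne_zero (neg_ne_zero.2 hp))
        (one_sub_exp_ne_zero (sub_ne_zero.2 hpq)))
      hseed
  refine eq_top_iff.2 fun g _ => ?_
  obtain ⟨a, b, c, d, e⟩ := g
  set o := 2 - exp (q * c) - exp (p * c)
  have hN : (⟨a - o, b - o, 0, 0, 0⟩ : G7 p q) ∈ C := by
    change (a - o, b - o) ∈ planeSubgroup C
    simp [hplane]
  convert C.mul_mem (hA c d e) hN using 1
  ext <;> simp [o]

end G7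

/-- `H = {(x,y,0,x+y,0)}` is a subgroup of `G₇`; the indicated set `A` is an
`H`-connected left transversal to `H` in `G₇` and generates `G₇`. -/
theorem G7_connected_transversal (p q : ℝ) (hp : p ≠ 0) (hq : q ≠ 0) (hpq : p ≠ q) :
    ∃ H : Subgroup (G7 p q),
      (H : Set (G7 p q)) = {g : G7 p q | ∃ x y : ℝ, g = ⟨x, y, 0, x + y, 0⟩} ∧
      IsLeftTransversal {g : G7 p q | ∃ k1 k2 k3 : ℝ,
          g = ⟨2 - Real.exp (q * k1) - Real.exp (p * k1),
                2 - Real.exp (q * k1) - Real.exp (p * k1), k1, k2, k3⟩}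
        (H : Set (G7 p q)) ∧
      (∀ a ∈ {g : G7 p q | ∃ k1 k2 k3 : ℝ,
          g = ⟨2 - Real.exp (q * k1) - Real.exp (p * k1),
                2 - Real.exp (q * k1) - Real.exp (p * k1), k1, k2, k3⟩},
        ∀ b ∈ {g : G7 p q | ∃ k1 k2 k3 : ℝ,
          g = ⟨2 - Real.exp (q * k1) - Real.exp (p * k1),
                2 - Real.exp (q * k1) - Real.exp (p * k1), k1, k2, k3⟩},
          a⁻¹ * b⁻¹ * a * b ∈ H) ∧
      Subgroup.closure {g : G7 p q | ∃ k1 k2 k3 : ℝ,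
          g = ⟨2 - Real.exp (q * k1) - Real.exp (p * k1),
                2 - Real.exp (q * k1) - Real.exp (p * k1), k1, k2, k3⟩} = ⊤ :=
  ⟨G7.subgroupH p q, rfl, G7.isLeftTransversal_transversalA,
    fun _ ha _ hb => G7.inv_mul_inv_mul_mul_mem_subgroupH ha hb,
    G7.closure_transversalA hp hq hpq⟩
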